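/- arXiv:2505.07967 — 3 statements merged into one kernel-verified Lean document; each statement's English description precedes it below -/
import Mathlib

section
/- Fix m ∈ ℕ, q ∈ [1,∞], a depth L ∈ ℕ, widths (d₀ = d, d₁, …, d_L, d_{L+1} = 1), and parameters (A₀, …, A_L, b₀, …, b_{L−1}) of a RePU network g of order m. Let ‖·‖_q denote the ℓ^q→ℓ^q operator norm and let (A, b) denote A augmented with the column b. Set r_s = max{ ‖(A_s, b_s)‖_q, 1 } for 0 ≤ s ≤ L−1, and define Ã_ℓ = A_ℓ / r_ℓ and b̃_ℓ = b_ℓ / ∏_{s=0}^{ℓ} r_s^{m^{ℓ−s}} for 0 ≤ ℓ ≤ L−1, and Ã_L = A_L · ∏_{s=0}^{L−1} r_s^{m^{L−s}}. Then ‖(Ã_ℓ, b̃_ℓ)‖_q ≤ 1 for every 0 ≤ ℓ ≤ L−1, and the rescaled network computes the same function: for all x ∈ ℝ^d, Ã_L σ_m( Ã_{L−1}( ⋯ σ_m(Ã₀ x + b̃₀) ⋯ ) + b̃_{L−1} ) = A_L σ_m( A_{L−1}( ⋯ σ_m(A₀ x + b₀) ⋯ ) + b_{L−1} ). -/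
/-!
Since `σ_m(c t) = c^m σ_m(t)` for `c ≥ 0`, a positive factor can be pushed through every layer:
if the rescaled `ℓ`-th hidden layer equals `k_ℓ⁻¹` times the original one, then dividing `A_ℓ` by
`r_ℓ` and `b_ℓ` by `k_ℓ r_ℓ` divides the preactivation by `k_ℓ r_ℓ`, so the next hidden layer is
divided by `k_{ℓ+1} = (k_ℓ r_ℓ)^m`. With `k_ℓ = ∏_{s<ℓ} r_s^{m^{ℓ-s}}` the output weight
`k_L A_L` undoes the last factor. For the norm bound, `(Ã_ℓ, b̃_ℓ)` applied to `(y, t)` is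
`r_ℓ⁻¹ (A_ℓ, b_ℓ)` applied to `(y, t / k_ℓ)`, a vector of no larger norm since `k_ℓ ≥ 1`.
-/

/-- RePU activation of order `m`: `σ_m(t) = (max{t,0})^m`. -/
noncomputable def repu (m : ℕ) (t : ℝ) : ℝ := (max t 0) ^ m

/-- Hidden-layer forward pass of a RePU network with architecture `arch`
(`arch 0` input units, `arch ℓ` units at layer `ℓ`), weight matrices `A` and biases `b`:
`netFwd m arch A b x ℓ` is the output of the `ℓ`-th hidden layer at input `x`. -/
noncomputable def netFwd (m : ℕ) (arch : ℕ → ℕ)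
    (A : ∀ ℓ : ℕ, Matrix (Fin (arch (ℓ + 1))) (Fin (arch ℓ)) ℝ)
    (b : ∀ ℓ : ℕ, Fin (arch (ℓ + 1)) → ℝ)
    (x : Fin (arch 0) → ℝ) : (ℓ : ℕ) → Fin (arch ℓ) → ℝ
  | 0 => x
  | ℓ + 1 => fun i => repu m ((A ℓ).mulVec (netFwd m arch A b x ℓ) i + b ℓ i)

/-- Real output of a depth-`L` RePU network (the output layer `g_L(x) = A_L x` has one
unit, `arch (L+1) = 1`; we sum the coordinates of the output vector). -/
noncomputable def netOut (m : ℕ) (arch : ℕ → ℕ)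
    (A : ∀ ℓ : ℕ, Matrix (Fin (arch (ℓ + 1))) (Fin (arch ℓ)) ℝ)
    (b : ∀ ℓ : ℕ, Fin (arch (ℓ + 1)) → ℝ) (L : ℕ) (x : Fin (arch 0) → ℝ) : ℝ :=
  ∑ i, (A L).mulVec (netFwd m arch A b x L) i

open scoped ENNReal

/-- ℓ^q norm of a vector, `q ∈ [1,∞]`. -/
noncomputable def vNorm (q : ℝ≥0∞) {n : ℕ} (v : Fin n → ℝ) : ℝ :=
  if q = ⊤ then ⨆ i, |v i| else (∑ i, |v i| ^ q.toReal) ^ (1 / q.toReal)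

/-- The `ℓ^q → ℓ^q` operator norm of a matrix. -/
noncomputable def opNorm (q : ℝ≥0∞) {p r : ℕ} (A : Matrix (Fin p) (Fin r) ℝ) : ℝ :=
  sSup { t : ℝ | ∃ x : Fin r → ℝ, vNorm q x ≤ 1 ∧ t = vNorm q (A.mulVec x) }

/-- The matrix `A` augmented with the column `b`. -/
noncomputable def augM {p r : ℕ} (A : Matrix (Fin p) (Fin r) ℝ) (b : Fin p → ℝ) :
    Matrix (Fin p) (Fin (r + 1)) ℝ :=
  Matrix.of fun i j => (Fin.snoc (A i) (b i) : Fin (r + 1) → ℝ) j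

open Matrix

section Norms

variable {q : ℝ≥0∞} {n : ℕ}

lemma vNorm_nonneg (v : Fin n → ℝ) : 0 ≤ vNorm q v := by
  unfold vNorm
  split
  · exact Real.iSup_nonneg fun i => abs_nonneg (v i)
  · positivity

lemma vNorm_mono (hq : q ≠ 0) {v w : Fin n → ℝ} (h : ∀ i, |v i| ≤ |w i|) :
    vNorm q v ≤ vNorm q w := by
  unfold vNorm
  split
  · exact ciSup_mono (Finite.bddAbove_range _) h
  · next htop =>
    have hp := ENNReal.toReal_pos hq htop
    refine Real.rpow_le_rpow (by positivity) (Finset.sum_le_sum fun i _ => ?_) (by positivity)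
    exact Real.rpow_le_rpow (abs_nonneg _) (h i) hp.le

lemma abs_le_vNorm (hq : q ≠ 0) (v : Fin n → ℝ) (j : Fin n) : |v j| ≤ vNorm q v := by
  unfold vNorm
  split
  · exact le_ciSup (Finite.bddAbove_range fun i => |v i|) j
  · next htop =>
    have hp := ENNReal.toReal_pos hq htop
    calc |v j| = (|v j| ^ q.toReal) ^ (1 / q.toReal) := by
          rw [one_div, Real.rpow_rpow_inv (abs_nonneg _) hp.ne']
    _ ≤ _ := by
        gcongr
        exact Finset.single_le_sum (f := fun i => |v i| ^ q.toReal)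
          (fun i _ => by positivity) (Finset.mem_univ j)

lemma vNorm_smul_of_nonneg (hq : q ≠ 0) {c : ℝ} (hc : 0 ≤ c) (v : Fin n → ℝ) :
    vNorm q (c • v) = c * vNorm q v := by
  unfold vNorm
  simp only [Pi.smul_apply, smul_eq_mul, abs_mul, abs_of_nonneg hc]
  split
  · exact (Real.mul_iSup_of_nonneg hc _).symm
  · next htop =>
    have hp := ENNReal.toReal_pos hq htop
    simp only [Real.mul_rpow hc (abs_nonneg _), ← Finset.mul_sum]
    rw [Real.mul_rpow (by positivity) (by positivity), one_div,
      Real.rpow_rpow_inv hc hp.ne']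

variable {p r : ℕ}

lemma opNorm_nonneg (M : Matrix (Fin p) (Fin r) ℝ) : 0 ≤ opNorm q M :=
  Real.sSup_nonneg fun _ ⟨_, _, ht⟩ => ht ▸ vNorm_nonneg _

lemma le_opNorm (hq : q ≠ 0) (M : Matrix (Fin p) (Fin r) ℝ) {x : Fin r → ℝ}
    (hx : vNorm q x ≤ 1) : vNorm q (M *ᵥ x) ≤ opNorm q M := by
  refine le_csSup ⟨vNorm q fun i => ∑ j, |M i j|, ?_⟩ ⟨x, hx, rfl⟩
  rintro _ ⟨y, hy, rfl⟩
  refine vNorm_mono hq fun i => ?_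
  calc |(M *ᵥ y) i| ≤ ∑ j, |M i j * y j| := by
        simpa only [mulVec, dotProduct] using Finset.abs_sum_le_sum_abs _ _
  _ ≤ ∑ j, |M i j| := Finset.sum_le_sum fun j _ => by
      rw [abs_mul]
      exact mul_le_of_le_one_right (abs_nonneg _) ((abs_le_vNorm hq y j).trans hy)
  _ ≤ |∑ j, (|M i j|)| := le_abs_self _

lemma opNorm_le {M : Matrix (Fin p) (Fin r) ℝ} {c : ℝ} (hc : 0 ≤ c)
    (h : ∀ x, vNorm q x ≤ 1 → vNorm q (M *ᵥ x) ≤ c) : opNorm q M ≤ c :=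
  Real.sSup_le (fun _ ⟨x, hx, ht⟩ => ht ▸ h x hx) hc

lemma augM_mulVec (A : Matrix (Fin p) (Fin r) ℝ) (b : Fin p → ℝ) (x : Fin (r + 1) → ℝ) :
    augM A b *ᵥ x = A *ᵥ Fin.init x + x (Fin.last r) • b := by
  funext i
  simp [augM, Matrix.mulVec, dotProduct, Fin.sum_univ_castSucc, Fin.init, mul_comm]

lemma opNorm_augM_smul_le (hq : q ≠ 0) (A : Matrix (Fin p) (Fin r) ℝ) (b : Fin p → ℝ)
    {t u : ℝ} (ht : 0 ≤ t) (hu : |u| ≤ 1) :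
    opNorm q (augM (t • A) ((u * t) • b)) ≤ t * opNorm q (augM A b) := by
  refine opNorm_le (mul_nonneg ht (opNorm_nonneg _)) fun x hx => ?_
  set x' : Fin (r + 1) → ℝ := Fin.snoc (Fin.init x) (u * x (Fin.last r))
  have hmul : augM (t • A) ((u * t) • b) *ᵥ x = t • (augM A b *ᵥ x') := by
    simp only [augM_mulVec, x', Fin.init_snoc, Fin.snoc_last, Matrix.smul_mulVec, smul_add,
      smul_smul]
    ring_nf
  have hx' : vNorm q x' ≤ 1 := by
    refine le_trans (vNorm_mono hq fun j => ?_) hx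
    refine Fin.lastCases ?_ (fun j => ?_) j
    · simp only [x', Fin.snoc_last, abs_mul]
      exact mul_le_of_le_one_left (abs_nonneg _) hu
    · simp [x', Fin.init]
  rw [hmul, vNorm_smul_of_nonneg hq ht]
  exact mul_le_mul_of_nonneg_left (le_opNorm hq _ hx') ht

end Norms

lemma repu_mul_of_nonneg (m : ℕ) {c : ℝ} (hc : 0 ≤ c) (t : ℝ) :
    repu m (c * t) = c ^ m * repu m t := by
  rw [repu, repu, ← mul_pow, mul_max_of_nonneg _ _ hc, mul_zero]

lemma netFwd_smul_smul (m : ℕ) (arch : ℕ → ℕ)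
    (A : ∀ ℓ : ℕ, Matrix (Fin (arch (ℓ + 1))) (Fin (arch ℓ)) ℝ)
    (b : ∀ ℓ : ℕ, Fin (arch (ℓ + 1)) → ℝ) (r c k : ℕ → ℝ) (hk0 : k 0 = 1)
    (hc : ∀ ℓ, c ℓ = k ℓ * r ℓ) (hk : ∀ ℓ, k (ℓ + 1) = c ℓ ^ m) (hc_nonneg : ∀ ℓ, 0 ≤ c ℓ)
    (x : Fin (arch 0) → ℝ) (ℓ : ℕ) :
    netFwd m arch (fun ℓ => (r ℓ)⁻¹ • A ℓ) (fun ℓ => (c ℓ)⁻¹ • b ℓ) x ℓ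
      = (k ℓ)⁻¹ • netFwd m arch A b x ℓ := by
  induction ℓ with
  | zero => simp [netFwd, hk0]
  | succ ℓ ih =>
    funext i
    have hpre : ((r ℓ)⁻¹ • A ℓ) *ᵥ ((k ℓ)⁻¹ • netFwd m arch A b x ℓ)
        = (c ℓ)⁻¹ • (A ℓ *ᵥ netFwd m arch A b x ℓ) := by
      rw [Matrix.smul_mulVec, Matrix.mulVec_smul, smul_smul, hc, mul_inv, mul_comm]
    simp only [netFwd, ih, hpre, Pi.smul_apply, smul_eq_mul, ← mul_add]
    rw [repu_mul_of_nonneg m (inv_nonneg.mpr (hc_nonneg ℓ)), inv_pow, hk]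

lemma prod_range_succ_pow_pow_sub_pow {M : Type*} [CommMonoid M] (a : ℕ → M) (m ℓ : ℕ) :
    (∏ s ∈ Finset.range (ℓ + 1), a s ^ (m ^ (ℓ - s))) ^ m
      = ∏ s ∈ Finset.range (ℓ + 1), a s ^ (m ^ (ℓ + 1 - s)) := by
  rw [← Finset.prod_pow]
  refine Finset.prod_congr rfl fun s hs => ?_
  rw [← pow_mul, ← pow_succ]
  congr 2
  have := Finset.mem_range.mp hs
  omega

theorem stmt12_general (m : ℕ) (q : ℝ≥0∞) (hq : 1 ≤ q)
    (L : ℕ) (arch : ℕ → ℕ)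
    (A : ∀ ℓ : ℕ, Matrix (Fin (arch (ℓ + 1))) (Fin (arch ℓ)) ℝ)
    (b : ∀ ℓ : ℕ, Fin (arch (ℓ + 1)) → ℝ) :
    (∀ ℓ, ℓ < L →
      opNorm q (augM
        ((max (opNorm q (augM (A ℓ) (b ℓ))) 1)⁻¹ • A ℓ)
        ((∏ s ∈ Finset.range (ℓ + 1),
            (max (opNorm q (augM (A s) (b s))) 1) ^ (m ^ (ℓ - s)))⁻¹ • b ℓ)) ≤ 1) ∧
    (∀ x : Fin (arch 0) → ℝ,
      ((∏ s ∈ Finset.range L, (max (opNorm q (augM (A s) (b s))) 1) ^ (m ^ (L - s))) • A L).mulVec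
          (netFwd m arch
            (fun ℓ => (max (opNorm q (augM (A ℓ) (b ℓ))) 1)⁻¹ • A ℓ)
            (fun ℓ => (∏ s ∈ Finset.range (ℓ + 1),
                (max (opNorm q (augM (A s) (b s))) 1) ^ (m ^ (ℓ - s)))⁻¹ • b ℓ) x L)
        = (A L).mulVec (netFwd m arch A b x L)) := by
  have hq0 : q ≠ 0 := (zero_lt_one.trans_le hq).ne'
  set r : ℕ → ℝ := fun s => max (opNorm q (augM (A s) (b s))) 1
  set k : ℕ → ℝ := fun ℓ => ∏ s ∈ Finset.range ℓ, r s ^ (m ^ (ℓ - s))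
  have hr : ∀ s, 1 ≤ r s := fun s => le_max_right _ _
  have hk : ∀ ℓ, 1 ≤ k ℓ := fun ℓ => Finset.one_le_prod fun s _ => one_le_pow₀ (hr s)
  have hr0 : ∀ s, 0 < r s := fun s => zero_lt_one.trans_le (hr s)
  have hk0 : ∀ ℓ, 0 < k ℓ := fun ℓ => zero_lt_one.trans_le (hk ℓ)
  have hc : ∀ ℓ, ∏ s ∈ Finset.range (ℓ + 1), r s ^ (m ^ (ℓ - s)) = k ℓ * r ℓ := fun ℓ => by
    rw [Finset.prod_range_succ, Nat.sub_self, pow_zero, pow_one]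
  constructor
  · intro ℓ _
    have hk_inv : |(k ℓ)⁻¹| ≤ 1 := by
      rw [abs_inv, abs_of_pos (hk0 ℓ)]
      exact inv_le_one_of_one_le₀ (hk ℓ)
    rw [hc, mul_inv]
    calc _ ≤ (r ℓ)⁻¹ * opNorm q (augM (A ℓ) (b ℓ)) :=
          opNorm_augM_smul_le hq0 _ _ (inv_nonneg.mpr (hr0 ℓ).le) hk_inv
      _ ≤ (r ℓ)⁻¹ * r ℓ := by gcongr; exact le_max_left _ _
      _ = 1 := inv_mul_cancel₀ (hr0 ℓ).ne'
  · intro x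
    rw [netFwd_smul_smul m arch A b r _ k (Finset.prod_range_zero _) hc
      (fun ℓ => (prod_range_succ_pow_pow_sub_pow r m ℓ).symm)
      (fun ℓ => hc ℓ ▸ (mul_pos (hk0 ℓ) (hr0 ℓ)).le), Matrix.smul_mulVec, Matrix.mulVec_smul,
      smul_smul, mul_inv_cancel₀ (hk0 L).ne', one_smul]

/-- Rescaling a RePU network: with `r_s = max{‖(A_s, b_s)‖_q, 1}`,
`Ã_ℓ = A_ℓ/r_ℓ`, `b̃_ℓ = b_ℓ/∏_{s≤ℓ} r_s^{m^{ℓ−s}}` and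
`Ã_L = A_L·∏_{s<L} r_s^{m^{L−s}}`, the rescaled hidden layers satisfy
`‖(Ã_ℓ, b̃_ℓ)‖_q ≤ 1` and the rescaled network computes the same function. -/
theorem stmt12 (m : ℕ) (hm : 1 ≤ m) (q : ℝ≥0∞) (hq : 1 ≤ q)
    (L : ℕ) (hL : 1 ≤ L) (arch : ℕ → ℕ) (harch : arch (L + 1) = 1)
    (A : ∀ ℓ : ℕ, Matrix (Fin (arch (ℓ + 1))) (Fin (arch ℓ)) ℝ)
    (b : ∀ ℓ : ℕ, Fin (arch (ℓ + 1)) → ℝ) :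
    (∀ ℓ, ℓ < L →
      opNorm q (augM
        ((max (opNorm q (augM (A ℓ) (b ℓ))) 1)⁻¹ • A ℓ)
        ((∏ s ∈ Finset.range (ℓ + 1),
            (max (opNorm q (augM (A s) (b s))) 1) ^ (m ^ (ℓ - s)))⁻¹ • b ℓ)) ≤ 1) ∧
    (∀ x : Fin (arch 0) → ℝ,
      ((∏ s ∈ Finset.range L, (max (opNorm q (augM (A s) (b s))) 1) ^ (m ^ (L - s))) • A L).mulVec
          (netFwd m arch
            (fun ℓ => (max (opNorm q (augM (A ℓ) (b ℓ))) 1)⁻¹ • A ℓ)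
            (fun ℓ => (∏ s ∈ Finset.range (ℓ + 1),
                (max (opNorm q (augM (A s) (b s))) 1) ^ (m ^ (ℓ - s)))⁻¹ • b ℓ) x L)
        = (A L).mulVec (netFwd m arch A b x L)) :=
  stmt12_general m q hq L arch A b
end

section
/- Fix d, m, L ∈ ℕ with m ≥ 2 and let g = g_L ∘ ⋯ ∘ g₀ be a RePU network of order m with architecture (d₀ = d, d₁, …, d_L, d_{L+1} = 1) whose hidden-layer parameters are normalized: ‖(A_ℓ, b_ℓ)‖_∞ ≤ 1 for all 0 ≤ ℓ ≤ L−1. Let 𝒳 = { x ∈ ℝ^d : ‖x‖_∞ ≤ 1 }. Then g is continuously differentiable on 𝒳 and: (a) ‖∇g(x)‖₁ ≤ m^L · ‖A_L‖_∞ for every x ∈ 𝒳; (b) ‖∇g(x) − ∇g(x̃)‖₁ ≤ L · m^{2L} · ‖A_L‖_∞ · ‖x − x̃‖_∞ for all x, x̃ ∈ 𝒳 (in particular, at every point of 𝒳 where g is twice differentiable, the Hessian satisfies ‖∇²g(x)‖_∞ ≤ L · m^{2L} · ‖A_L‖_∞). -/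
/-- The `ℓ∞` operator norm of a matrix: `‖A‖_∞ = max_i Σ_j |a_{ij}|`. -/
noncomputable def matInfNorm {p q : ℕ} (A : Matrix (Fin p) (Fin q) ℝ) : ℝ :=
  ⨆ i, ∑ j, |A i j|

/-- `‖(A, b)‖_∞`, the `ℓ∞` operator norm of `A` augmented with the column `b`. -/
noncomputable def augInfNorm {p q : ℕ} (A : Matrix (Fin p) (Fin q) ℝ) (b : Fin p → ℝ) : ℝ :=
  ⨆ i, ((∑ j, |A i j|) + |b i|)

open Set Matrix

theorem abs_repu_le_one (n : ℕ) {t : ℝ} (ht : |t| ≤ 1) : |repu n t| ≤ 1 := by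
  rw [repu, abs_pow, abs_of_nonneg (le_max_right t 0)]
  exact pow_le_one₀ (le_max_right t 0) (max_le (le_of_abs_le ht) zero_le_one)

theorem abs_repu_sub_repu_le (n : ℕ) {s t : ℝ} (hs : |s| ≤ 1) (ht : |t| ≤ 1) :
    |repu n s - repu n t| ≤ n * |s - t| := by
  have hmax : ∀ {u : ℝ}, |u| ≤ 1 → |max u 0| ≤ 1 := fun hu => by
    rw [abs_of_nonneg (le_max_right _ 0)]
    exact max_le (le_of_abs_le hu) zero_le_one
  calc |repu n s - repu n t|
      ≤ |max s 0 - max t 0| * n * max |max s 0| |max t 0| ^ (n - 1) := abs_pow_sub_pow_le _ _ n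
    _ ≤ |s - t| * n * 1 := by
        gcongr ?_ * _ * ?_
        · exact abs_max_sub_max_le_abs s t 0
        · exact pow_le_one₀ (le_max_of_le_left (abs_nonneg _)) (max_le (hmax hs) (hmax ht))
    _ = n * |s - t| := by ring

theorem continuous_repu (n : ℕ) : Continuous (repu n) :=
  (continuous_id.max continuous_const).pow n

theorem hasDerivAt_repu {m : ℕ} (hm : 2 ≤ m) (t : ℝ) :
    HasDerivAt (repu m) (m * repu (m - 1) t) t := by
  have hneg : ∀ {n : ℕ}, n ≠ 0 → ∀ s : ℝ, s ≤ 0 → repu n s = 0 := fun hn s hs => by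
    rw [repu, max_eq_right hs, zero_pow hn]
  have hpos : ∀ {n : ℕ} (s : ℝ), 0 ≤ s → repu n s = s ^ n := fun s hs => by
    rw [repu, max_eq_left hs]
  rcases lt_trichotomy t 0 with ht | rfl | ht
  · rw [hneg (by omega) t ht.le, mul_zero]
    refine (hasDerivAt_const t 0).congr_of_eventuallyEq ?_
    filter_upwards [Iio_mem_nhds ht] with s hs using hneg (by omega) s (le_of_lt hs)
  · rw [hneg (by omega) 0 le_rfl, mul_zero]
    have hleft : HasDerivWithinAt (repu m) 0 (Iic 0) 0 :=
      (hasDerivWithinAt_const 0 _ 0).congr (fun s hs => hneg (by omega) s hs)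
        (hneg (by omega) 0 le_rfl)
    have hright : HasDerivWithinAt (repu m) 0 (Ici 0) 0 := by
      have := ((hasDerivAt_pow m (0 : ℝ)).hasDerivWithinAt (s := Ici 0)).congr
        (fun s hs => hpos s hs) (hpos 0 le_rfl)
      rwa [zero_pow (by omega), mul_zero] at this
    simpa [Iic_union_Ici] using hleft.union hright
  · rw [hpos t ht.le]
    refine (hasDerivAt_pow m t).congr_of_eventuallyEq ?_
    filter_upwards [Ioi_mem_nhds ht] with s hs using hpos s (le_of_lt hs)

theorem contDiff_repu {m : ℕ} (hm : 2 ≤ m) : ContDiff ℝ 1 (repu m) := by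
  rw [contDiff_one_iff_deriv]
  refine ⟨fun t => (hasDerivAt_repu hm t).differentiableAt, ?_⟩
  rw [show deriv (repu m) = fun t => m * repu (m - 1) t from
    funext fun t => (hasDerivAt_repu hm t).deriv]
  exact continuous_const.mul (continuous_repu (m - 1))

section MatrixCLM

variable {ι κ : Type*} [Fintype κ]

noncomputable def Matrix.mulVecCLM (M : Matrix ι κ ℝ) : (κ → ℝ) →L[ℝ] (ι → ℝ) :=
  LinearMap.toContinuousLinearMap M.mulVecLin

@[simp]
theorem Matrix.mulVecCLM_apply (M : Matrix ι κ ℝ) (v : κ → ℝ) : M.mulVecCLM v = M *ᵥ v :=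
  rfl

theorem Matrix.mulVecCLM_sub (M N : Matrix ι κ ℝ) :
    (M - N).mulVecCLM = M.mulVecCLM - N.mulVecCLM := by
  ext v : 1
  simp [Matrix.sub_mulVec]

theorem Matrix.abs_mulVec_apply_le (M : Matrix ι κ ℝ) (v : κ → ℝ) (i : ι) :
    |(M *ᵥ v) i| ≤ (∑ j, |M i j|) * ‖v‖ := by
  rw [mulVec, dotProduct, Finset.sum_mul]
  refine (Finset.abs_sum_le_sum_abs _ _).trans (Finset.sum_le_sum fun j _ => ?_)
  rw [abs_mul]
  gcongr
  exact norm_le_pi_norm v j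

theorem Matrix.norm_mulVecCLM_le [Fintype ι] {M : Matrix ι κ ℝ} {C : ℝ} (hC : 0 ≤ C)
    (hM : ∀ i, ∑ j, |M i j| ≤ C) : ‖M.mulVecCLM‖ ≤ C :=
  ContinuousLinearMap.opNorm_le_bound _ hC fun v =>
    (pi_norm_le_iff_of_nonneg (by positivity)).2 fun i =>
      (M.abs_mulVec_apply_le v i).trans (by gcongr; exact hM i)

theorem Matrix.norm_mulVecCLM_diagonal_le [Fintype ι] [DecidableEq ι] (s : ι → ℝ) :
    ‖(Matrix.diagonal s).mulVecCLM‖ ≤ ‖s‖ :=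
  Matrix.norm_mulVecCLM_le (norm_nonneg s) fun i => by
    simpa [Matrix.diagonal_apply, apply_ite] using norm_le_pi_norm s i

theorem sum_abs_apply_single_le_norm [DecidableEq κ] (φ : (κ → ℝ) →L[ℝ] ℝ) :
    ∑ i, |φ (Pi.single i 1)| ≤ ‖φ‖ := by
  set v : κ → ℝ := fun i => SignType.sign (φ (Pi.single i 1))
  have hv : ‖v‖ ≤ 1 := (pi_norm_le_iff_of_nonneg zero_le_one).2 fun i => by
    rcases lt_trichotomy (φ (Pi.single i 1)) 0 with h | h | h <;> simp [v, h]
  have hφv : φ v = ∑ i, |φ (Pi.single i 1)| := by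
    conv_lhs => rw [← Finset.univ_sum_single v]
    simp only [map_sum]
    refine Finset.sum_congr rfl fun i _ => ?_
    rw [← mul_one (v i), ← smul_eq_mul, Pi.single_smul', map_smul, smul_eq_mul, sign_mul_self]
  calc ∑ i, |φ (Pi.single i 1)| = φ v := hφv.symm
    _ ≤ ‖φ v‖ := Real.le_norm_self _
    _ ≤ ‖φ‖ * ‖v‖ := φ.le_opNorm v
    _ ≤ ‖φ‖ := mul_le_of_le_one_right (norm_nonneg φ) hv

theorem norm_sum_proj_le :
    ‖∑ i : κ, ContinuousLinearMap.proj (R := ℝ) (φ := fun _ : κ => ℝ) i‖ ≤ Fintype.card κ :=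
  calc _ ≤ ∑ i : κ, ‖ContinuousLinearMap.proj (R := ℝ) (φ := fun _ : κ => ℝ) i‖ :=
        norm_sum_le _ _
    _ ≤ ∑ _i : κ, (1 : ℝ) := Finset.sum_le_sum fun i _ =>
        ContinuousLinearMap.opNorm_le_bound _ zero_le_one fun v => by
          simpa using norm_le_pi_norm v i
    _ = Fintype.card κ := by simp

noncomputable def Matrix.sumMulVecCLM [Fintype ι] (M : Matrix ι κ ℝ) : (κ → ℝ) →L[ℝ] ℝ :=
  (∑ i, ContinuousLinearMap.proj i) ∘L M.mulVecCLM

theorem Matrix.norm_sumMulVecCLM_le [Fintype ι] (M : Matrix ι κ ℝ) :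
    ‖M.sumMulVecCLM‖ ≤ Fintype.card ι * ‖M.mulVecCLM‖ :=
  (ContinuousLinearMap.opNorm_comp_le _ _).trans (by gcongr; exact norm_sum_proj_le)

theorem sum_abs_add_abs_le_of_augInfNorm_le {p q : ℕ} {M : Matrix (Fin p) (Fin q) ℝ}
    {c : Fin p → ℝ} {r : ℝ} (h : augInfNorm M c ≤ r) (i : Fin p) : ∑ j, |M i j| + |c i| ≤ r :=
  (le_ciSup (Set.finite_range _).bddAbove i).trans h

theorem norm_mulVecCLM_le_matInfNorm {p q : ℕ} (M : Matrix (Fin p) (Fin q) ℝ) :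
    ‖M.mulVecCLM‖ ≤ matInfNorm M :=
  M.norm_mulVecCLM_le (Real.iSup_nonneg fun _ => Finset.sum_nonneg fun _ _ => abs_nonneg _)
    fun i => le_ciSup (f := fun i => ∑ j, |M i j|) (Set.finite_range _).bddAbove i

end MatrixCLM

section Layer

variable {ι κ : Type*} [Fintype κ] {A : Matrix ι κ ℝ} {b : ι → ℝ}

noncomputable def repuLayer (n : ℕ) (A : Matrix ι κ ℝ) (b : ι → ℝ) (v : κ → ℝ) : ι → ℝ :=
  fun i => repu n ((A *ᵥ v) i + b i)

theorem abs_mulVec_add_apply_le_one (hAb : ∀ i, ∑ j, |A i j| + |b i| ≤ 1) {v : κ → ℝ}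
    (hv : ‖v‖ ≤ 1) (i : ι) : |(A *ᵥ v) i + b i| ≤ 1 :=
  calc |(A *ᵥ v) i + b i| ≤ (∑ j, |A i j|) * ‖v‖ + |b i| :=
        (abs_add_le _ _).trans (add_le_add_left (A.abs_mulVec_apply_le v i) _)
    _ ≤ (∑ j, |A i j|) * 1 + |b i| := by gcongr
    _ ≤ 1 := by simpa using hAb i

variable [Fintype ι]

theorem norm_mulVecCLM_le_one_of_augmented (hAb : ∀ i, ∑ j, |A i j| + |b i| ≤ 1) :
    ‖A.mulVecCLM‖ ≤ 1 :=
  A.norm_mulVecCLM_le zero_le_one fun i => (le_add_of_nonneg_right (abs_nonneg (b i))).trans (hAb i)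

theorem norm_repuLayer_le_one (n : ℕ) (hAb : ∀ i, ∑ j, |A i j| + |b i| ≤ 1) {v : κ → ℝ}
    (hv : ‖v‖ ≤ 1) : ‖repuLayer n A b v‖ ≤ 1 :=
  (pi_norm_le_iff_of_nonneg zero_le_one).2 fun i =>
    abs_repu_le_one n (abs_mulVec_add_apply_le_one hAb hv i)

theorem norm_repuLayer_sub_le (n : ℕ) (hAb : ∀ i, ∑ j, |A i j| + |b i| ≤ 1) {v w : κ → ℝ}
    (hv : ‖v‖ ≤ 1) (hw : ‖w‖ ≤ 1) :
    ‖repuLayer n A b v - repuLayer n A b w‖ ≤ n * ‖v - w‖ :=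
  (pi_norm_le_iff_of_nonneg (by positivity)).2 fun i =>
    calc |repuLayer n A b v i - repuLayer n A b w i|
        ≤ n * |((A *ᵥ v) i + b i) - ((A *ᵥ w) i + b i)| :=
          abs_repu_sub_repu_le n (abs_mulVec_add_apply_le_one hAb hv i)
            (abs_mulVec_add_apply_le_one hAb hw i)
      _ = n * |(A *ᵥ (v - w)) i| := by rw [mulVec_sub, Pi.sub_apply, add_sub_add_right_eq_sub]
      _ ≤ n * ‖A.mulVecCLM (v - w)‖ := by gcongr; exact norm_le_pi_norm (A *ᵥ (v - w)) i
      _ ≤ n * (1 * ‖v - w‖) := by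
          gcongr; exact A.mulVecCLM.le_of_opNorm_le (norm_mulVecCLM_le_one_of_augmented hAb) _
      _ = n * ‖v - w‖ := by rw [one_mul]

variable {m : ℕ}

theorem contDiff_repuLayer (hm : 2 ≤ m) : ContDiff ℝ 1 (repuLayer m A b) :=
  contDiff_pi' fun i => (contDiff_repu hm).comp
    ((ContinuousLinearMap.proj i ∘L A.mulVecCLM).contDiff.add contDiff_const)

variable [DecidableEq ι]

theorem hasFDerivAt_repuLayer (hm : 2 ≤ m) (v : κ → ℝ) :
    HasFDerivAt (repuLayer m A b)
      ((diagonal ((m : ℝ) • repuLayer (m - 1) A b v)).mulVecCLM ∘L A.mulVecCLM) v := by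
  refine hasFDerivAt_pi'' fun i => ?_
  have haffine : HasFDerivAt (fun w => (A *ᵥ w) i + b i)
      (ContinuousLinearMap.proj i ∘L A.mulVecCLM) v :=
    (ContinuousLinearMap.proj i ∘L A.mulVecCLM).hasFDerivAt.add_const (b i)
  refine ((hasDerivAt_repu hm _).comp_hasFDerivAt v haffine).congr_fderiv ?_
  refine ContinuousLinearMap.ext fun w => ?_
  simp only [ContinuousLinearMap.comp_apply, _root_.smul_apply,
    ContinuousLinearMap.proj_apply, mulVecCLM_apply, mulVec_diagonal, Pi.smul_apply,
    smul_eq_mul, repuLayer, mul_assoc]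

theorem norm_fderiv_repuLayer_le (hm : 2 ≤ m) (hAb : ∀ i, ∑ j, |A i j| + |b i| ≤ 1)
    {v : κ → ℝ} (hv : ‖v‖ ≤ 1) : ‖fderiv ℝ (repuLayer m A b) v‖ ≤ m := by
  rw [(hasFDerivAt_repuLayer hm v).fderiv]
  calc _ ≤ ‖(m : ℝ) • repuLayer (m - 1) A b v‖ * ‖A.mulVecCLM‖ :=
        (ContinuousLinearMap.opNorm_comp_le _ _).trans
          (by gcongr; exact norm_mulVecCLM_diagonal_le _)
    _ ≤ (m * 1) * 1 := by
        rw [norm_smul, Real.norm_natCast]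
        gcongr
        · exact norm_repuLayer_le_one _ hAb hv
        · exact norm_mulVecCLM_le_one_of_augmented hAb
    _ = m := by ring

theorem norm_fderiv_repuLayer_sub_le (hm : 2 ≤ m) (hAb : ∀ i, ∑ j, |A i j| + |b i| ≤ 1)
    {v w : κ → ℝ} (hv : ‖v‖ ≤ 1) (hw : ‖w‖ ≤ 1) :
    ‖fderiv ℝ (repuLayer m A b) v - fderiv ℝ (repuLayer m A b) w‖ ≤ m ^ 2 * ‖v - w‖ := by
  have hdiag : ∀ s t : ι → ℝ, diagonal s - diagonal t = diagonal (s - t) :=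
    fun s t => diagonal_sub s t
  rw [(hasFDerivAt_repuLayer hm v).fderiv, (hasFDerivAt_repuLayer hm w).fderiv,
    ← ContinuousLinearMap.sub_comp, ← mulVecCLM_sub,
    hdiag, ← smul_sub]
  calc _ ≤ ‖(m : ℝ) • (repuLayer (m - 1) A b v - repuLayer (m - 1) A b w)‖ * ‖A.mulVecCLM‖ :=
        (ContinuousLinearMap.opNorm_comp_le _ _).trans
          (by gcongr; exact norm_mulVecCLM_diagonal_le _)
    _ ≤ (m * (m * ‖v - w‖)) * 1 := by
        rw [norm_smul, Real.norm_natCast]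
        gcongr
        · exact (norm_repuLayer_sub_le _ hAb hv hw).trans
            (by gcongr; exact_mod_cast Nat.sub_le m 1)
        · exact norm_mulVecCLM_le_one_of_augmented hAb
    _ = m ^ 2 * ‖v - w‖ := by ring

end Layer

section Network

variable {m : ℕ} {arch : ℕ → ℕ} {A : ∀ ℓ : ℕ, Matrix (Fin (arch (ℓ + 1))) (Fin (arch ℓ)) ℝ}
  {b : ∀ ℓ : ℕ, Fin (arch (ℓ + 1)) → ℝ} {L : ℕ}

theorem norm_netFwd_le_one (hAb : ∀ ℓ < L, ∀ i, ∑ j, |A ℓ i j| + |b ℓ i| ≤ 1)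
    {x : Fin (arch 0) → ℝ} (hx : ‖x‖ ≤ 1) : ∀ {ℓ : ℕ}, ℓ ≤ L → ‖netFwd m arch A b x ℓ‖ ≤ 1
  | 0, _ => hx
  | ℓ + 1, hℓ => norm_repuLayer_le_one m (hAb ℓ (by omega)) (norm_netFwd_le_one hAb hx (by omega))

theorem norm_netFwd_sub_le (hAb : ∀ ℓ < L, ∀ i, ∑ j, |A ℓ i j| + |b ℓ i| ≤ 1)
    {x y : Fin (arch 0) → ℝ} (hx : ‖x‖ ≤ 1) (hy : ‖y‖ ≤ 1) :
    ∀ {ℓ : ℕ}, ℓ ≤ L →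
      ‖netFwd m arch A b x ℓ - netFwd m arch A b y ℓ‖ ≤ m ^ ℓ * ‖x - y‖
  | 0, _ => by simp [netFwd]
  | ℓ + 1, hℓ =>
    calc _ ≤ m * ‖netFwd m arch A b x ℓ - netFwd m arch A b y ℓ‖ :=
          norm_repuLayer_sub_le m (hAb ℓ (by omega)) (norm_netFwd_le_one hAb hx (by omega))
            (norm_netFwd_le_one hAb hy (by omega))
      _ ≤ m * (m ^ ℓ * ‖x - y‖) := by gcongr; exact norm_netFwd_sub_le hAb hx hy (by omega)
      _ = m ^ (ℓ + 1) * ‖x - y‖ := by ring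

theorem contDiff_netFwd (hm : 2 ≤ m) : ∀ ℓ : ℕ, ContDiff ℝ 1 fun x => netFwd m arch A b x ℓ
  | 0 => contDiff_id
  | ℓ + 1 => (contDiff_repuLayer hm).comp (contDiff_netFwd hm ℓ)

theorem fderiv_netFwd_succ (hm : 2 ≤ m) (x : Fin (arch 0) → ℝ) (ℓ : ℕ) :
    fderiv ℝ (fun y => netFwd m arch A b y (ℓ + 1)) x =
      fderiv ℝ (repuLayer m (A ℓ) (b ℓ)) (netFwd m arch A b x ℓ) ∘L
        fderiv ℝ (fun y => netFwd m arch A b y ℓ) x :=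
  fderiv_comp x ((contDiff_repuLayer hm).differentiable one_ne_zero _)
    ((contDiff_netFwd hm ℓ).differentiable one_ne_zero x)

theorem norm_fderiv_netFwd_le (hm : 2 ≤ m) (hAb : ∀ ℓ < L, ∀ i, ∑ j, |A ℓ i j| + |b ℓ i| ≤ 1)
    {x : Fin (arch 0) → ℝ} (hx : ‖x‖ ≤ 1) :
    ∀ {ℓ : ℕ}, ℓ ≤ L → ‖fderiv ℝ (fun y => netFwd m arch A b y ℓ) x‖ ≤ m ^ ℓ
  | 0, _ => by simpa [netFwd] using ContinuousLinearMap.norm_id_le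
  | ℓ + 1, hℓ => by
    rw [fderiv_netFwd_succ hm, pow_succ']
    exact (ContinuousLinearMap.opNorm_comp_le _ _).trans <| mul_le_mul
      (norm_fderiv_repuLayer_le hm (hAb ℓ (by omega)) (norm_netFwd_le_one hAb hx (by omega)))
      (norm_fderiv_netFwd_le hm hAb hx (by omega)) (norm_nonneg _) (Nat.cast_nonneg m)

theorem norm_fderiv_netFwd_sub_le (hm : 2 ≤ m)
    (hAb : ∀ ℓ < L, ∀ i, ∑ j, |A ℓ i j| + |b ℓ i| ≤ 1)
    {x y : Fin (arch 0) → ℝ} (hx : ‖x‖ ≤ 1) (hy : ‖y‖ ≤ 1) :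
    ∀ {ℓ : ℕ}, ℓ ≤ L →
      ‖fderiv ℝ (fun z => netFwd m arch A b z ℓ) x - fderiv ℝ (fun z => netFwd m arch A b z ℓ) y‖
        ≤ ℓ * m ^ (2 * ℓ) * ‖x - y‖
  | 0, _ => by simp [netFwd]
  | ℓ + 1, hℓ => by
    set D := fderiv ℝ (repuLayer m (A ℓ) (b ℓ))
    set J := fderiv ℝ (fun z => netFwd m arch A b z ℓ)
    set F := fun z => netFwd m arch A b z ℓ
    have hF : ∀ {z : Fin (arch 0) → ℝ}, ‖z‖ ≤ 1 → ‖F z‖ ≤ 1 :=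
      fun hz => norm_netFwd_le_one hAb hz (by omega)
    have hsplit : D (F x) ∘L J x - D (F y) ∘L J y =
        (D (F x) - D (F y)) ∘L J x + D (F y) ∘L (J x - J y) := by
      rw [ContinuousLinearMap.sub_comp, ContinuousLinearMap.comp_sub]
      abel
    have h1m : (1 : ℝ) ≤ m := by exact_mod_cast (by omega : 1 ≤ m)
    rw [fderiv_netFwd_succ hm, fderiv_netFwd_succ hm, hsplit]
    calc _ ≤ ‖D (F x) - D (F y)‖ * ‖J x‖ + ‖D (F y)‖ * ‖J x - J y‖ :=
          (norm_add_le _ _).trans (add_le_add (ContinuousLinearMap.opNorm_comp_le _ _)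
            (ContinuousLinearMap.opNorm_comp_le _ _))
      _ ≤ m ^ 2 * (m ^ ℓ * ‖x - y‖) * m ^ ℓ + m * (ℓ * m ^ (2 * ℓ) * ‖x - y‖) := by
          gcongr
          · exact (norm_fderiv_repuLayer_sub_le hm (hAb ℓ (by omega)) (hF hx) (hF hy)).trans
              (by gcongr; exact norm_netFwd_sub_le hAb hx hy (by omega))
          · exact norm_fderiv_netFwd_le hm hAb hx (by omega)
          · exact norm_fderiv_repuLayer_le hm (hAb ℓ (by omega)) (hF hy)
          · exact norm_fderiv_netFwd_sub_le hm hAb hx hy (by omega)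
      _ = m ^ (2 * ℓ + 2) * ‖x - y‖ + ℓ * m ^ (2 * ℓ + 1) * ‖x - y‖ := by ring
      _ ≤ m ^ (2 * ℓ + 2) * ‖x - y‖ + ℓ * m ^ (2 * ℓ + 2) * ‖x - y‖ := by
          gcongr
          norm_num
      _ = (ℓ + 1 : ℕ) * m ^ (2 * (ℓ + 1)) * ‖x - y‖ := by push_cast; ring

theorem netOut_eq_sumMulVecCLM_comp :
    netOut m arch A b L = (A L).sumMulVecCLM ∘ fun x => netFwd m arch A b x L := by
  funext x
  simp [netOut, Matrix.sumMulVecCLM]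

theorem fderiv_netOut (hm : 2 ≤ m) (x : Fin (arch 0) → ℝ) :
    fderiv ℝ (netOut m arch A b L) x =
      (A L).sumMulVecCLM ∘L fderiv ℝ (fun y => netFwd m arch A b y L) x := by
  rw [netOut_eq_sumMulVecCLM_comp, fderiv_comp x (A L).sumMulVecCLM.differentiableAt
    ((contDiff_netFwd hm L).differentiable one_ne_zero x), ContinuousLinearMap.fderiv]

end Network

theorem stmt13_general (m L : ℕ) (hm : 2 ≤ m)
    (arch : ℕ → ℕ) (hout : arch (L + 1) = 1)
    (A : ∀ ℓ : ℕ, Matrix (Fin (arch (ℓ + 1))) (Fin (arch ℓ)) ℝ)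
    (b : ∀ ℓ : ℕ, Fin (arch (ℓ + 1)) → ℝ)
    (hnorm : ∀ ℓ, ℓ < L → augInfNorm (A ℓ) (b ℓ) ≤ 1) :
    ContDiff ℝ 1 (netOut m arch A b L) ∧
    (∀ x : Fin (arch 0) → ℝ, ‖x‖ ≤ 1 →
      (∑ i, |fderiv ℝ (netOut m arch A b L) x (Pi.single i 1)|)
        ≤ (m : ℝ) ^ L * matInfNorm (A L)) ∧
    (∀ x y : Fin (arch 0) → ℝ, ‖x‖ ≤ 1 → ‖y‖ ≤ 1 →
      (∑ i, |fderiv ℝ (netOut m arch A b L) x (Pi.single i 1)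
          - fderiv ℝ (netOut m arch A b L) y (Pi.single i 1)|)
        ≤ (L : ℝ) * (m : ℝ) ^ (2 * L) * matInfNorm (A L) * ‖x - y‖) := by
  have hAb : ∀ ℓ < L, ∀ i, ∑ j, |A ℓ i j| + |b ℓ i| ≤ 1 :=
    fun ℓ hℓ => sum_abs_add_abs_le_of_augInfNorm_le (hnorm ℓ hℓ)
  have houtput : ‖(A L).sumMulVecCLM‖ ≤ matInfNorm (A L) := by
    calc _ ≤ Fintype.card (Fin (arch (L + 1))) * ‖(A L).mulVecCLM‖ :=
          (A L).norm_sumMulVecCLM_le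
      _ ≤ matInfNorm (A L) := by
          simpa [hout] using norm_mulVecCLM_le_matInfNorm (A L)
  have hmat : 0 ≤ matInfNorm (A L) := (norm_nonneg _).trans houtput
  refine ⟨?_, fun x hx => ?_, fun x y hx hy => ?_⟩
  · rw [netOut_eq_sumMulVecCLM_comp]
    exact (A L).sumMulVecCLM.contDiff.comp (contDiff_netFwd hm L)
  · calc _ ≤ ‖fderiv ℝ (netOut m arch A b L) x‖ := sum_abs_apply_single_le_norm _
      _ ≤ matInfNorm (A L) * m ^ L := by
          rw [fderiv_netOut hm]
          exact (ContinuousLinearMap.opNorm_comp_le _ _).trans <| mul_le_mul houtput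
            (norm_fderiv_netFwd_le hm hAb hx le_rfl) (norm_nonneg _) hmat
      _ = _ := mul_comm _ _
  · simp only [← _root_.sub_apply]
    calc _ ≤ ‖fderiv ℝ (netOut m arch A b L) x - fderiv ℝ (netOut m arch A b L) y‖ :=
          sum_abs_apply_single_le_norm _
      _ ≤ matInfNorm (A L) * (L * m ^ (2 * L) * ‖x - y‖) := by
          rw [fderiv_netOut hm, fderiv_netOut hm, ← ContinuousLinearMap.comp_sub]
          exact (ContinuousLinearMap.opNorm_comp_le _ _).trans <| mul_le_mul houtput
            (norm_fderiv_netFwd_sub_le hm hAb hx hy le_rfl) (norm_nonneg _) hmat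
      _ = _ := by ring

/-- A normalized RePU network (`m ≥ 2`, hidden layers with
`‖(A_ℓ, b_ℓ)‖_∞ ≤ 1`) is continuously differentiable, with gradient ℓ¹-norm bounded by
`m^L ‖A_L‖_∞` on `𝒳 = {‖x‖_∞ ≤ 1}` and gradient Lipschitz modulus at most
`L m^{2L} ‖A_L‖_∞` there.  (Here `Fin (arch 0) → ℝ` carries the sup norm.) -/
theorem stmt13 (d m L : ℕ) (hd : 0 < d) (hm : 2 ≤ m) (hL : 1 ≤ L)
    (arch : ℕ → ℕ) (h0 : arch 0 = d) (hout : arch (L + 1) = 1)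
    (A : ∀ ℓ : ℕ, Matrix (Fin (arch (ℓ + 1))) (Fin (arch ℓ)) ℝ)
    (b : ∀ ℓ : ℕ, Fin (arch (ℓ + 1)) → ℝ)
    (hnorm : ∀ ℓ, ℓ < L → augInfNorm (A ℓ) (b ℓ) ≤ 1) :
    ContDiff ℝ 1 (netOut m arch A b L) ∧
    (∀ x : Fin (arch 0) → ℝ, ‖x‖ ≤ 1 →
      (∑ i, |fderiv ℝ (netOut m arch A b L) x (Pi.single i 1)|)
        ≤ (m : ℝ) ^ L * matInfNorm (A L)) ∧
    (∀ x y : Fin (arch 0) → ℝ, ‖x‖ ≤ 1 → ‖y‖ ≤ 1 →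
      (∑ i, |fderiv ℝ (netOut m arch A b L) x (Pi.single i 1)
          - fderiv ℝ (netOut m arch A b L) y (Pi.single i 1)|)
        ≤ (L : ℝ) * (m : ℝ) ^ (2 * L) * matInfNorm (A L) * ‖x - y‖) :=
  stmt13_general m L hm arch hout A b hnorm
end

section
/- Let d ∈ ℕ, m ∈ ℕ, 𝔹^d = { x ∈ ℝ^d : ‖x‖₂ ≤ 1 }, 𝕊^d = { u ∈ ℝ^{d+1} : ‖u‖₂ = 1 }, and let h : ℝ^{d+1} ∖ {0} → ℝ be continuously differentiable. Define u(x) = (x, 1)/√(1 + ‖x‖₂²) ∈ 𝕊^d and S_m(h)(x) = (1 + ‖x‖₂²)^{m/2} · h(u(x)) for x ∈ 𝔹^d, and for 1 ≤ i < j ≤ d+1 the angular derivatives D_{i,j}h(u) = u_i ∂_{u_j}h(u) − u_j ∂_{u_i}h(u). Then sup_{x ∈ 𝔹^d} |S_m(h)(x)| ≤ 2^{m/2} · sup_{u ∈ 𝕊^d} |h(u)|, and there exists a constant C > 0 depending only on m and d such that sup_{x ∈ 𝔹^d} ‖∇(S_m h)(x)‖_∞ ≤ C · ( sup_{u ∈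 𝕊^d} |h(u)| + Σ_{1 ≤ i < j ≤ d+1} sup_{u ∈ 𝕊^d} |D_{i,j}h(u)| ). -/
/-- The operator `S_m`: `S_m(h)(x) = (1 + ‖x‖₂²)^{m/2} · h(u(x))` where
`u(x) = (x, 1)/√(1 + ‖x‖₂²)` lies on the unit sphere `𝕊^d ⊆ ℝ^{d+1}`. -/
noncomputable def Smop (m : ℕ) {d : ℕ} (h : (Fin (d + 1) → ℝ) → ℝ) (x : Fin d → ℝ) : ℝ :=
  (1 + ∑ i, x i ^ 2) ^ ((m : ℝ) / 2) *
    h (fun j => (Real.sqrt (1 + ∑ i, x i ^ 2))⁻¹ * (Fin.snoc x 1 : Fin (d + 1) → ℝ) j)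

/-- Angular derivative `D_{i,j}h(u) = u_i ∂_{u_j}h(u) − u_j ∂_{u_i}h(u)`. -/
noncomputable def angDeriv {d : ℕ} (i j : Fin (d + 1)) (h : (Fin (d + 1) → ℝ) → ℝ)
    (u : Fin (d + 1) → ℝ) : ℝ :=
  u i * fderiv ℝ h u (Pi.single j 1) - u j * fderiv ℝ h u (Pi.single i 1)

/-- The Euclidean unit sphere `𝕊^d = {u ∈ ℝ^{d+1} : ‖u‖₂ = 1}`. -/
def eucSphere (d : ℕ) : Set (Fin (d + 1) → ℝ) := { u | ∑ j, u j ^ 2 = 1 }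

/-!
Write `N = 1 + ‖x‖₂²` and `u = u(x)`. Along `eᵢ` the point `u` moves with velocity
`(eᵢ - uᵢ u)/√N`, the tangential part of `eᵢ`, and on the sphere
`Dh(u)(eᵢ - uᵢ u) = ∑ⱼ uⱼ D_{j,i}h(u)`. Hence
`∂ᵢ S_m h = m xᵢ N^{m/2-1} h(u) + N^{m/2} N^{-1/2} ∑ⱼ uⱼ D_{j,i}h(u)`,
and on the ball `1 ≤ N ≤ 2`, `|xᵢ| ≤ 1`, `|uⱼ| ≤ 1`, which gives `C = (m + 1) 2^{m/2}`.
-/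

open Finset

lemma abs_le_one_of_sum_sq_le_one {ι : Type*} [Fintype ι] {v : ι → ℝ}
    (hv : ∑ k, v k ^ 2 ≤ 1) (j : ι) : |v j| ≤ 1 := by
  rw [← sq_le_one_iff_abs_le_one]
  exact (single_le_sum (f := fun k => v k ^ 2) (fun k _ => sq_nonneg (v k)) (mem_univ j)).trans hv

section Sphere

variable {d : ℕ}

lemma abs_le_one_of_mem_eucSphere {u : Fin (d + 1) → ℝ} (hu : u ∈ eucSphere d)
    (j : Fin (d + 1)) : |u j| ≤ 1 :=
  abs_le_one_of_sum_sq_le_one hu.le j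

lemma ne_zero_of_mem_eucSphere {u : Fin (d + 1) → ℝ} (hu : u ∈ eucSphere d) : u ≠ 0 := by
  rintro rfl
  simp [eucSphere] at hu

lemma isCompact_eucSphere (d : ℕ) : IsCompact (eucSphere d) := by
  refine Metric.isCompact_of_isClosed_isBounded ?_ ?_
  · exact isClosed_eq (by fun_prop) continuous_const
  · refine (Metric.isBounded_closedBall (x := 0) (r := 1)).subset fun u hu => ?_
    rw [Metric.mem_closedBall, dist_zero_right, pi_norm_le_iff_of_nonneg zero_le_one]
    exact fun j => (Real.norm_eq_abs _).trans_le (abs_le_one_of_mem_eucSphere hu j)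

variable {f : (Fin (d + 1) → ℝ) → ℝ}

lemma bddAbove_abs_image_eucSphere (hf : ContinuousOn f {u | u ≠ 0}) :
    BddAbove ((fun u => |f u|) '' eucSphere d) :=
  (isCompact_eucSphere d).bddAbove_image
    (hf.mono fun _ hu => ne_zero_of_mem_eucSphere hu).abs

lemma abs_le_sSup_abs_image_eucSphere (hf : ContinuousOn f {u | u ≠ 0})
    {u : Fin (d + 1) → ℝ} (hu : u ∈ eucSphere d) :
    |f u| ≤ sSup ((fun v => |f v|) '' eucSphere d) :=
  le_csSup (bddAbove_abs_image_eucSphere hf) ⟨u, hu, rfl⟩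

end Sphere

lemma sum_erase_abs_le_sum_filter_lt {ι : Type*} [Fintype ι] [LinearOrder ι]
    (F : ι → ι → ℝ) (hF : ∀ a b, |F a b| = |F b a|) (k : ι) :
    ∑ j ∈ univ.erase k, |F j k| ≤
      ∑ p ∈ univ.filter (fun p : ι × ι => p.1 < p.2), |F p.1 p.2| := by
  let P : ι → ι × ι := fun j => if j < k then (j, k) else (k, j)
  have hP : ∀ j ∈ univ.erase k, |F j k| = |F (P j).1 (P j).2| ∧ (P j).1 < (P j).2 := by
    intro j hj
    rcases lt_or_gt_of_ne (ne_of_mem_erase hj) with hlt | hgt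
    · simp [P, hlt]
    · simp [P, hgt.not_gt, hgt, hF j k]
  have hinj : Set.InjOn P (univ.erase k) := by
    intro a ha b hb hab
    have ha' := ne_of_mem_erase ha
    have hb' := ne_of_mem_erase hb
    by_cases hak : a < k <;> by_cases hbk : b < k <;> simp_all [P, Prod.ext_iff]
  calc ∑ j ∈ univ.erase k, |F j k| = ∑ p ∈ (univ.erase k).image P, |F p.1 p.2| := by
        rw [sum_image hinj]
        exact sum_congr rfl fun j hj => (hP j hj).1
    _ ≤ _ := by
        refine sum_le_sum_of_subset_of_nonneg ?_ fun _ _ _ => abs_nonneg _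
        intro p hp
        obtain ⟨j, hj, rfl⟩ := mem_image.1 hp
        simpa using (hP j hj).2

section Gnomonic

variable {d : ℕ}

noncomputable def bracketSq (x : Fin d → ℝ) : ℝ := 1 + ∑ i, x i ^ 2

/-- The paper's `u(x)`: the central projection of `(x, 1)` to `𝕊^d`. -/
noncomputable def gnomonic (x : Fin d → ℝ) : Fin (d + 1) → ℝ :=
  (√(bracketSq x))⁻¹ • Fin.snoc x 1

lemma Smop_eq (m : ℕ) (h : (Fin (d + 1) → ℝ) → ℝ) (x : Fin d → ℝ) :
    Smop m h x = bracketSq x ^ ((m : ℝ) / 2) * h (gnomonic x) := rfl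

lemma one_le_bracketSq (x : Fin d → ℝ) : 1 ≤ bracketSq x :=
  le_add_of_nonneg_right (sum_nonneg fun i _ => sq_nonneg (x i))

lemma bracketSq_pos (x : Fin d → ℝ) : 0 < bracketSq x := one_pos.trans_le (one_le_bracketSq x)

lemma sqrt_bracketSq_pos (x : Fin d → ℝ) : 0 < √(bracketSq x) :=
  Real.sqrt_pos.2 (bracketSq_pos x)

lemma snoc_eq_sqrt_bracketSq_smul_gnomonic (x : Fin d → ℝ) :
    (Fin.snoc x 1 : Fin (d + 1) → ℝ) = √(bracketSq x) • gnomonic x := by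
  rw [gnomonic, smul_inv_smul₀ (sqrt_bracketSq_pos x).ne']

lemma gnomonic_castSucc (x : Fin d → ℝ) (i : Fin d) :
    gnomonic x i.castSucc = x i / √(bracketSq x) := by
  simp [gnomonic, div_eq_inv_mul]

lemma gnomonic_mem_eucSphere (x : Fin d → ℝ) : gnomonic x ∈ eucSphere d := by
  have hsnoc : ∑ j, (Fin.snoc x 1 : Fin (d + 1) → ℝ) j ^ 2 = bracketSq x := by
    simp [Fin.sum_univ_castSucc, bracketSq, add_comm]
  simp only [eucSphere, Set.mem_ofPred_eq, gnomonic, Pi.smul_apply, smul_eq_mul, mul_pow,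
    ← mul_sum, hsnoc, inv_pow, Real.sq_sqrt (bracketSq_pos x).le]
  exact inv_mul_cancel₀ (bracketSq_pos x).ne'

lemma gnomonic_ne_zero (x : Fin d → ℝ) : gnomonic x ≠ 0 :=
  ne_zero_of_mem_eucSphere (gnomonic_mem_eucSphere x)

lemma differentiable_bracketSq : Differentiable ℝ (bracketSq (d := d)) := by
  unfold bracketSq; fun_prop

lemma bracketSq_le_two {x : Fin d → ℝ} (hx : ∑ i, x i ^ 2 ≤ 1) : bracketSq x ≤ 2 := by
  rw [bracketSq]; linarith

end Gnomonic

section Derivative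

variable {d : ℕ}

lemma hasLineDerivAt_bracketSq (x : Fin d → ℝ) (i : Fin d) :
    HasLineDerivAt ℝ bracketSq (2 * x i) x (Pi.single i 1) := by
  have hline : (fun t : ℝ => bracketSq (x + t • Pi.single i 1))
      = fun t => bracketSq x + (2 * x i * t + t ^ 2) := by
    funext t
    have hk : ∀ k, (x + t • (Pi.single i 1 : Fin d → ℝ)) k ^ 2
        = x k ^ 2 + if k = i then 2 * x i * t + t ^ 2 else 0 := by
      intro k
      by_cases hki : k = i
      · subst hki; simp; ring
      · simp [hki]
    simp only [bracketSq, hk, sum_add_distrib, sum_ite_eq', mem_univ, if_true, add_assoc]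
  unfold HasLineDerivAt
  rw [hline]
  simpa using (((hasDerivAt_id (0 : ℝ)).const_mul (2 * x i)).add
    ((hasDerivAt_id (0 : ℝ)).pow 2)).const_add (bracketSq x)

lemma snoc_add_smul_single (x : Fin d → ℝ) (i : Fin d) (t : ℝ) :
    (Fin.snoc (x + t • Pi.single i 1) 1 : Fin (d + 1) → ℝ)
      = Fin.snoc x 1 + t • Pi.single i.castSucc 1 := by
  ext j
  induction j using Fin.lastCases with
  | last => simp
  | cast k => simp [Pi.single_apply, Fin.castSucc_inj]

lemma gnomonic_add_smul_single (x : Fin d → ℝ) (i : Fin d) (t : ℝ) :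
    gnomonic (x + t • Pi.single i 1)
      = (√(bracketSq (x + t • Pi.single i 1)))⁻¹ •
          (Fin.snoc x 1 + t • Pi.single i.castSucc 1) := by
  rw [gnomonic, snoc_add_smul_single]

lemma hasLineDerivAt_gnomonic (x : Fin d → ℝ) (i : Fin d) :
    HasLineDerivAt ℝ gnomonic
      ((√(bracketSq x))⁻¹ • (Pi.single i.castSucc 1 - gnomonic x i.castSucc • gnomonic x))
      x (Pi.single i 1) := by
  have hx0 : x + (0 : ℝ) • Pi.single i 1 = x := by simp
  have hs : HasDerivAt (fun t : ℝ => (√(bracketSq (x + t • Pi.single i 1)))⁻¹)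
      (-(x i / bracketSq x) / √(bracketSq x)) 0 := by
    refine (((hasLineDerivAt_bracketSq x i).sqrt ?_).inv ?_).congr_deriv ?_ <;> simp only [hx0]
    · exact (bracketSq_pos x).ne'
    · exact (sqrt_bracketSq_pos x).ne'
    · rw [Real.sq_sqrt (bracketSq_pos x).le]
      field_simp
  have hv : HasDerivAt
      (fun t : ℝ => (Fin.snoc x 1 : Fin (d + 1) → ℝ) + t • Pi.single i.castSucc 1)
      (Pi.single i.castSucc 1) 0 := by
    simpa using ((hasDerivAt_id (0 : ℝ)).smul_const
      (Pi.single i.castSucc 1 : Fin (d + 1) → ℝ)).const_add (Fin.snoc x 1 : Fin (d + 1) → ℝ)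
  unfold HasLineDerivAt
  simp only [gnomonic_add_smul_single]
  refine (hs.fun_smul hv).congr_deriv ?_
  -- the product rule's output becomes tangential once `Fin.snoc x 1 = √N • u` and `xᵢ = √N uᵢ`
  rw [hx0, zero_smul, add_zero, snoc_eq_sqrt_bracketSq_smul_gnomonic, gnomonic_castSucc, smul_smul,
    smul_sub, smul_smul, sub_eq_add_neg, ← neg_smul]
  congr 2
  have := (sqrt_bracketSq_pos x).ne'
  field_simp
  rw [Real.sq_sqrt (bracketSq_pos x).le, mul_div_cancel_right₀ _ (bracketSq_pos x).ne']

lemma differentiableAt_of_contDiffOn_ne_zero {E F : Type*} [NormedAddCommGroup E]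
    [NormedSpace ℝ E] [NormedAddCommGroup F] [NormedSpace ℝ F] {h : E → F}
    (hh : ContDiffOn ℝ 1 h {u | u ≠ 0}) {u : E} (hu : u ≠ 0) :
    DifferentiableAt ℝ h u :=
  (hh.contDiffAt (isOpen_compl_singleton.mem_nhds hu)).differentiableAt one_ne_zero

lemma sum_mul_angDeriv (h : (Fin (d + 1) → ℝ) → ℝ) {u : Fin (d + 1) → ℝ}
    (hu : u ∈ eucSphere d) (k : Fin (d + 1)) :
    ∑ j, u j * angDeriv j k h u = fderiv ℝ h u (Pi.single k 1 - u k • u) := by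
  set L := fderiv ℝ h u
  have hLu : L u = ∑ j, u j * L (Pi.single j 1) := by
    conv_lhs => rw [pi_eq_sum_univ' u]
    simp [map_sum]
  have hu' : ∑ j, u j ^ 2 = 1 := hu
  calc ∑ j, u j * angDeriv j k h u
      = (∑ j, u j ^ 2) * L (Pi.single k 1) - u k * ∑ j, u j * L (Pi.single j 1) := by
        simp only [angDeriv, sum_mul, mul_sum, ← sum_sub_distrib]
        exact sum_congr rfl fun j _ => by ring
    _ = L (Pi.single k 1 - u k • u) := by
        rw [hu', one_mul, ← hLu, map_sub, map_smul, smul_eq_mul]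

end Derivative

section AngularDerivative

variable {d : ℕ} {h : (Fin (d + 1) → ℝ) → ℝ}

lemma angDeriv_self (i : Fin (d + 1)) (u : Fin (d + 1) → ℝ) : angDeriv i i h u = 0 :=
  sub_self _

lemma angDeriv_swap (i j : Fin (d + 1)) (u : Fin (d + 1) → ℝ) :
    angDeriv j i h u = -angDeriv i j h u := by
  simp only [angDeriv]; ring

lemma continuousOn_angDeriv (hh : ContDiffOn ℝ 1 h {u | u ≠ 0}) (i j : Fin (d + 1)) :
    ContinuousOn (angDeriv i j h) {u | u ≠ 0} := by
  have hfd : ContinuousOn (fderiv ℝ h) {u | u ≠ 0} :=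
    hh.continuousOn_fderiv_of_isOpen isOpen_compl_singleton le_rfl
  unfold angDeriv
  fun_prop

lemma abs_sum_mul_angDeriv_le (hh : ContDiffOn ℝ 1 h {u | u ≠ 0}) {u : Fin (d + 1) → ℝ}
    (hu : u ∈ eucSphere d) (k : Fin (d + 1)) :
    |∑ j, u j * angDeriv j k h u| ≤
      ∑ p ∈ univ.filter (fun p : Fin (d + 1) × Fin (d + 1) => p.1 < p.2),
        sSup ((fun u => |angDeriv p.1 p.2 h u|) '' eucSphere d) :=
  calc |∑ j, u j * angDeriv j k h u|
      ≤ ∑ j, |angDeriv j k h u| := by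
        refine (abs_sum_le_sum_abs _ _).trans (sum_le_sum fun j _ => ?_)
        rw [abs_mul]
        exact mul_le_of_le_one_left (abs_nonneg _) (abs_le_one_of_mem_eucSphere hu j)
    _ = ∑ j ∈ univ.erase k, |angDeriv j k h u| := by
        rw [sum_erase _ (by rw [angDeriv_self, abs_zero])]
    _ ≤ ∑ p ∈ univ.filter (fun p : Fin (d + 1) × Fin (d + 1) => p.1 < p.2),
          |angDeriv p.1 p.2 h u| :=
        sum_erase_abs_le_sum_filter_lt (fun a b => angDeriv a b h u)
          (fun a b => by rw [angDeriv_swap, abs_neg]) k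
    _ ≤ _ := sum_le_sum fun p _ =>
        abs_le_sSup_abs_image_eucSphere (continuousOn_angDeriv hh p.1 p.2) hu

end AngularDerivative

section Smop

variable {d m : ℕ} {h : (Fin (d + 1) → ℝ) → ℝ}

lemma differentiableAt_gnomonic (x : Fin d → ℝ) : DifferentiableAt ℝ gnomonic x := by
  refine (((differentiable_bracketSq x).sqrt (bracketSq_pos x).ne').inv
    (sqrt_bracketSq_pos x).ne').smul ?_
  rw [differentiableAt_pi]
  intro j
  induction j using Fin.lastCases with
  | last => simp
  | cast k => simpa using differentiableAt_apply k x

lemma differentiableAt_Smop (hh : ContDiffOn ℝ 1 h {u | u ≠ 0}) (x : Fin d → ℝ) :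
    DifferentiableAt ℝ (Smop m h) x := by
  exact ((differentiable_bracketSq x).rpow_const (Or.inl (bracketSq_pos x).ne')).mul
    ((differentiableAt_of_contDiffOn_ne_zero hh (gnomonic_ne_zero x)).comp x
      (differentiableAt_gnomonic x))

lemma hasLineDerivAt_Smop (hh : ContDiffOn ℝ 1 h {u | u ≠ 0}) (x : Fin d → ℝ) (i : Fin d) :
    HasLineDerivAt ℝ (Smop m h)
      (m * x i * bracketSq x ^ ((m : ℝ) / 2 - 1) * h (gnomonic x)
        + bracketSq x ^ ((m : ℝ) / 2) * (√(bracketSq x))⁻¹ *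
          ∑ j, gnomonic x j * angDeriv j i.castSucc h (gnomonic x))
      x (Pi.single i 1) := by
  have hx0 : x + (0 : ℝ) • Pi.single i 1 = x := by simp
  have hpow : HasDerivAt (fun t : ℝ => bracketSq (x + t • Pi.single i 1) ^ ((m : ℝ) / 2))
      (2 * x i * ((m : ℝ) / 2) * bracketSq x ^ ((m : ℝ) / 2 - 1)) 0 := by
    have := (hasLineDerivAt_bracketSq x i).rpow_const (p := (m : ℝ) / 2)
      (by rw [hx0]; exact Or.inl (bracketSq_pos x).ne')
    rwa [hx0] at this
  have hcomp : HasDerivAt (fun t : ℝ => h (gnomonic (x + t • Pi.single i 1)))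
      (fderiv ℝ h (gnomonic x) ((√(bracketSq x))⁻¹ •
        (Pi.single i.castSucc 1 - gnomonic x i.castSucc • gnomonic x))) 0 := by
    have hdh : HasFDerivAt h (fderiv ℝ h (gnomonic x))
        (gnomonic (x + (0 : ℝ) • Pi.single i 1)) := by
      rw [hx0]
      exact (differentiableAt_of_contDiffOn_ne_zero hh (gnomonic_ne_zero x)).hasFDerivAt
    exact hdh.comp_hasDerivAt 0 (hasLineDerivAt_gnomonic x i)
  refine (hpow.mul hcomp).congr_deriv ?_
  rw [hx0, map_smul, ← sum_mul_angDeriv h (gnomonic_mem_eucSphere x), smul_eq_mul]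
  ring

lemma fderiv_Smop_apply_single (hh : ContDiffOn ℝ 1 h {u | u ≠ 0}) (x : Fin d → ℝ)
    (i : Fin d) :
    fderiv ℝ (Smop m h) x (Pi.single i 1)
      = m * x i * bracketSq x ^ ((m : ℝ) / 2 - 1) * h (gnomonic x)
        + bracketSq x ^ ((m : ℝ) / 2) * (√(bracketSq x))⁻¹ *
          ∑ j, gnomonic x j * angDeriv j i.castSucc h (gnomonic x) :=
  (differentiableAt_Smop hh x).lineDeriv_eq_fderiv.symm.trans (hasLineDerivAt_Smop hh x i).lineDeriv

end Smop

section Bounds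

variable {d m : ℕ} {h : (Fin (d + 1) → ℝ) → ℝ} {x : Fin d → ℝ}

lemma bracketSq_rpow_le (hx : ∑ i, x i ^ 2 ≤ 1) :
    bracketSq x ^ ((m : ℝ) / 2) ≤ 2 ^ ((m : ℝ) / 2) :=
  Real.rpow_le_rpow (bracketSq_pos x).le (bracketSq_le_two hx) (by positivity)

lemma abs_Smop_le (hh : ContinuousOn h {u | u ≠ 0}) (hx : ∑ i, x i ^ 2 ≤ 1) :
    |Smop m h x| ≤ 2 ^ ((m : ℝ) / 2) * sSup ((fun u => |h u|) '' eucSphere d) := by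
  rw [Smop_eq, abs_mul, abs_of_nonneg (Real.rpow_nonneg (bracketSq_pos x).le _)]
  exact mul_le_mul (bracketSq_rpow_le hx)
    (abs_le_sSup_abs_image_eucSphere hh (gnomonic_mem_eucSphere x)) (abs_nonneg _)
    (by positivity)

lemma abs_fderiv_Smop_apply_single_le (hh : ContDiffOn ℝ 1 h {u | u ≠ 0})
    (hx : ∑ i, x i ^ 2 ≤ 1) (i : Fin d) :
    |fderiv ℝ (Smop m h) x (Pi.single i 1)| ≤
      (m + 1) * 2 ^ ((m : ℝ) / 2) * (sSup ((fun u => |h u|) '' eucSphere d)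
        + ∑ p ∈ univ.filter (fun p : Fin (d + 1) × Fin (d + 1) => p.1 < p.2),
            sSup ((fun u => |angDeriv p.1 p.2 h u|) '' eucSphere d)) := by
  rw [fderiv_Smop_apply_single hh x i]
  set N := bracketSq x
  set A := sSup ((fun u => |h u|) '' eucSphere d)
  set B := ∑ p ∈ univ.filter (fun p : Fin (d + 1) × Fin (d + 1) => p.1 < p.2),
    sSup ((fun u => |angDeriv p.1 p.2 h u|) '' eucSphere d)
  have hA : |h (gnomonic x)| ≤ A :=
    abs_le_sSup_abs_image_eucSphere hh.continuousOn (gnomonic_mem_eucSphere x)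
  have hB : |∑ j, gnomonic x j * angDeriv j i.castSucc h (gnomonic x)| ≤ B :=
    abs_sum_mul_angDeriv_le hh (gnomonic_mem_eucSphere x) i.castSucc
  have hA0 : 0 ≤ A := (abs_nonneg _).trans hA
  have hB0 : 0 ≤ B := (abs_nonneg _).trans hB
  have hxi : |x i| ≤ 1 := abs_le_one_of_sum_sq_le_one hx i
  have hpow : N ^ ((m : ℝ) / 2) ≤ 2 ^ ((m : ℝ) / 2) := bracketSq_rpow_le hx
  have hpow' : N ^ ((m : ℝ) / 2 - 1) ≤ 2 ^ ((m : ℝ) / 2) :=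
    (Real.rpow_le_rpow_of_exponent_le (one_le_bracketSq x) (by linarith)).trans hpow
  have hsqrt : (√N)⁻¹ ≤ 1 :=
    inv_le_one_of_one_le₀ (Real.one_le_sqrt.2 (one_le_bracketSq x))
  have hN : 0 ≤ N := (bracketSq_pos x).le
  calc _ ≤ m * |x i| * N ^ ((m : ℝ) / 2 - 1) * |h (gnomonic x)|
          + N ^ ((m : ℝ) / 2) * (√N)⁻¹ *
            |∑ j, gnomonic x j * angDeriv j i.castSucc h (gnomonic x)| := by
        refine (abs_add_le _ _).trans_eq ?_
        simp only [abs_mul, Nat.abs_cast, abs_of_nonneg (Real.rpow_nonneg hN _),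
          abs_of_nonneg (inv_nonneg.2 (Real.sqrt_nonneg N))]
    _ ≤ m * 1 * 2 ^ ((m : ℝ) / 2) * A + 2 ^ ((m : ℝ) / 2) * 1 * B := by gcongr
    _ ≤ (m + 1) * 2 ^ ((m : ℝ) / 2) * (A + B) := by
        have : 0 ≤ (2 : ℝ) ^ ((m : ℝ) / 2) * (A + m * B) :=
          mul_nonneg (by positivity) (add_nonneg hA0 (mul_nonneg m.cast_nonneg hB0))
        nlinarith

end Bounds

theorem stmt14_general (d m : ℕ) :
    (∀ h : (Fin (d + 1) → ℝ) → ℝ, ContDiffOn ℝ 1 h { u | u ≠ 0 } →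
      ∀ x : Fin d → ℝ, (∑ i, x i ^ 2) ≤ 1 →
        |Smop m h x| ≤ 2 ^ ((m : ℝ) / 2) * sSup ((fun u => |h u|) '' eucSphere d)) ∧
    ∃ C : ℝ, 0 < C ∧
      ∀ h : (Fin (d + 1) → ℝ) → ℝ, ContDiffOn ℝ 1 h { u | u ≠ 0 } →
      ∀ x : Fin d → ℝ, (∑ i, x i ^ 2) ≤ 1 → ∀ i : Fin d,
        |fderiv ℝ (Smop m h) x (Pi.single i 1)| ≤
          C * (sSup ((fun u => |h u|) '' eucSphere d)
            + ∑ p ∈ Finset.univ.filter (fun p : Fin (d + 1) × Fin (d + 1) => p.1 < p.2),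
                sSup ((fun u => |angDeriv p.1 p.2 h u|) '' eucSphere d)) :=
  ⟨fun _ hh _ hx => abs_Smop_le hh.continuousOn hx,
    (m + 1) * 2 ^ ((m : ℝ) / 2), by positivity,
    fun _ hh _ hx i => abs_fderiv_Smop_apply_single_le hh hx i⟩

/-- Bounds for the operator `S_m` on `𝔹^d = {‖x‖₂ ≤ 1}`:
`sup_{𝔹^d} |S_m h| ≤ 2^{m/2}·sup_{𝕊^d}|h|`, and there is `C = C(m, d) > 0` with
`sup_{𝔹^d} ‖∇(S_m h)‖_∞ ≤ C·(sup_{𝕊^d}|h| + Σ_{i<j} sup_{𝕊^d}|D_{i,j}h|)` for every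
`h` continuously differentiable away from the origin. -/
theorem stmt14 (d m : ℕ) (hd : 0 < d) (hm : 1 ≤ m) :
    (∀ h : (Fin (d + 1) → ℝ) → ℝ, ContDiffOn ℝ 1 h { u | u ≠ 0 } →
      ∀ x : Fin d → ℝ, (∑ i, x i ^ 2) ≤ 1 →
        |Smop m h x| ≤ 2 ^ ((m : ℝ) / 2) * sSup ((fun u => |h u|) '' eucSphere d)) ∧
    ∃ C : ℝ, 0 < C ∧
      ∀ h : (Fin (d + 1) → ℝ) → ℝ, ContDiffOn ℝ 1 h { u | u ≠ 0 } →
      ∀ x : Fin d → ℝ, (∑ i, x i ^ 2) ≤ 1 → ∀ i : Fin d,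
        |fderiv ℝ (Smop m h) x (Pi.single i 1)| ≤
          C * (sSup ((fun u => |h u|) '' eucSphere d)
            + ∑ p ∈ Finset.univ.filter (fun p : Fin (d + 1) × Fin (d + 1) => p.1 < p.2),
                sSup ((fun u => |angDeriv p.1 p.2 h u|) '' eucSphere d)) :=
  stmt14_general d m
end
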